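/- Let X be a finite graph, w ∈ A_X a nontrivial element represented by a fully reduced word s₁^{e₁}⋯s_n^{e_n}, and μ the Magnus representation. Then the coefficient of the degree-n monomial s₁s₂⋯s_n ∈ M_X in μ(w) equals e₁e₂⋯e_n, which is nonzero; in particular w ∉ D_{n+1}(A_X). -/

import Mathlib

/-- Defining relators of the right-angled Artin group of a graph. -/
def raagRels {V : Type*} (X : SimpleGraph V) : Set (FreeGroup V) :=
  {r | ∃ x y : V, X.Adj x y ∧
    r = FreeGroup.of x * FreeGroup.of y * (FreeGroup.of x)⁻¹ * (FreeGroup.of y)⁻¹}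

/-- The right-angled Artin group of a graph. -/
def RAAG {V : Type*} (X : SimpleGraph V) : Type _ := PresentedGroup (raagRels X)

instance {V : Type*} (X : SimpleGraph V) : Group (RAAG X) := by
  unfold RAAG; infer_instance

/-- The generator of the RAAG corresponding to a vertex. -/
def RAAG.of {V : Type*} (X : SimpleGraph V) (v : V) : RAAG X := PresentedGroup.of v
/-- The congruence on the free monoid defining the right-angled Artin monoid. -/
def raamCon {V : Type*} (X : SimpleGraph V) : Con (FreeMonoid V) :=
  conGen (fun a b => ∃ x y : V, X.Adj x y ∧
    a = FreeMonoid.of x * FreeMonoid.of y ∧ b = FreeMonoid.of y * FreeMonoid.of x)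

/-- The right-angled Artin monoid of a graph. -/
def RAAM {V : Type*} (X : SimpleGraph V) : Type _ := (raamCon X).Quotient

instance {V : Type*} (X : SimpleGraph V) : Monoid (RAAM X) := by
  unfold RAAM; infer_instance

/-- The generator of the RAAM corresponding to a vertex. -/
def RAAM.of {V : Type*} (X : SimpleGraph V) (v : V) : RAAM X :=
  (raamCon X).mk' (FreeMonoid.of v)

/-- The image in `RAAM X` of a word in the vertices. -/
def RAAM.mk {V : Type*} (X : SimpleGraph V) (l : List V) : RAAM X :=
  (raamCon X).mk' (FreeMonoid.ofList l)
noncomputable section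

variable {V : Type*} (X : SimpleGraph V)

/-- The monoid ring of the RAAM. -/
abbrev RaamRing := MonoidAlgebra ℤ (RAAM X)

/-- The image of a vertex generator in the monoid ring. -/
def vgen (v : V) : RaamRing X := MonoidAlgebra.of ℤ (RAAM X) (RAAM.of X v)

/-- The two-sided ideal of the monoid ring generated by the vertex generators,
as a `ℤ`-submodule. -/
def genIdeal : Submodule ℤ (RaamRing X) :=
  Submodule.span ℤ {x | ∃ (a b : RaamRing X) (v : V), x = a * vgen X v * b}

lemma genIdeal_mul_right (x : RaamRing X) (hx : x ∈ genIdeal X) (r : RaamRing X) :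
    x * r ∈ genIdeal X := by
  induction hx using Submodule.span_induction generalizing r with
  | mem y hy =>
      obtain ⟨a, b, v, rfl⟩ := hy
      exact Submodule.subset_span ⟨a, b * r, v, by rw [mul_assoc]⟩
  | zero => rw [zero_mul]; exact (genIdeal X).zero_mem
  | add y z _ _ hy hz => rw [add_mul]; exact (genIdeal X).add_mem (hy r) (hz r)
  | smul c y _ hy => rw [smul_mul_assoc]; exact (genIdeal X).smul_mem c (hy r)

lemma genIdeal_pow_le (k : ℕ) : genIdeal X ^ (k + 2) ≤ genIdeal X ^ (k + 1) := by
  induction k with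
  | zero =>
      rw [pow_one, pow_succ, pow_one]
      exact Submodule.mul_le.2 fun x hx y _ => genIdeal_mul_right X x hx y
  | succ n ih =>
      rw [pow_succ (n := n + 2), pow_succ (n := n + 1)]
      exact mul_le_mul' ih le_rfl

/-- The quotient congruence by the `(k+1)`-st power of `genIdeal`. -/
def qcon (k : ℕ) : RingCon (RaamRing X) :=
  ringConGen (fun a b => a - b ∈ genIdeal X ^ (k + 1))

/-- The quotient ring `ℤ[M_X]/I^{k+1}`. -/
abbrev QRing (k : ℕ) := (qcon X k).Quotient

lemma qcon_le (k : ℕ) : qcon X (k + 1) ≤ qcon X k := by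
  refine RingCon.ringConGen_le.2 fun a b h => ?_
  exact RingConGen.Rel.of _ _ (genIdeal_pow_le X k h)

/-- The transition map `ℤ[M_X]/I^{k+2} → ℤ[M_X]/I^{k+1}`. -/
def qtrans (k : ℕ) : QRing X (k + 1) →+* QRing X k where
  toFun := Quotient.lift (fun r => (RingCon.mk' (qcon X k)) r)
    (fun a b h => (RingCon.eq _).2 (qcon_le X k h))
  map_one' := rfl
  map_mul' := fun a b => Quotient.inductionOn₂ a b fun _ _ => rfl
  map_zero' := rfl
  map_add' := fun a b => Quotient.inductionOn₂ a b fun _ _ => rfl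

@[simp] lemma qtrans_mk (k : ℕ) (r : RaamRing X) :
    qtrans X k (RingCon.mk' (qcon X (k + 1)) r) = RingCon.mk' (qcon X k) r := rfl

/-- The ring of partially commuting power series `P_X = lim← ℤ[M_X]/I^k`,
realized as the subring of compatible sequences in `Π k, ℤ[M_X]/I^{k+1}`. -/
def PSeries : Subring (Π k, QRing X k) where
  carrier := {f | ∀ k, qtrans X k (f (k + 1)) = f k}
  one_mem' := fun k => map_one _
  mul_mem' := fun {a b} ha hb k => by
    simp only [Pi.mul_apply, map_mul, ha k, hb k]
  zero_mem' := fun k => map_zero _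
  add_mem' := fun {a b} ha hb k => by
    simp only [Pi.add_apply, map_add, ha k, hb k]
  neg_mem' := fun {a} ha k => by
    simp only [Pi.neg_apply, map_neg, ha k]

/-- The canonical map `ℤ[M_X] → P_X`. -/
def toPSeries : RaamRing X →+* PSeries X where
  toFun r := ⟨fun k => RingCon.mk' (qcon X k) r, fun k => rfl⟩
  map_one' := by ext k; exact map_one _
  map_mul' a b := by ext k; exact map_mul _ a b
  map_zero' := by ext k; exact map_zero _
  map_add' a b := by ext k; exact map_add _ a b

/-- The ideal of power series with zero constant term, as a `ℤ`-submodule of `P_X`. -/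
def augIdeal : Submodule ℤ (PSeries X) where
  carrier := {f | (f : Π k, QRing X k) 0 = 0}
  zero_mem' := rfl
  add_mem' := fun {a b} ha hb => by
    show ((a : Π k, QRing X k) + b) 0 = 0
    simp only [Pi.add_apply]
    rw [ha, hb, add_zero]
  smul_mem' := fun c a ha => by
    show (c • (a : Π k, QRing X k)) 0 = 0
    simp only [Pi.smul_apply]
    rw [ha, smul_zero]

end

/-- A fully reduced word datum `s₁^{e₁} ⋯ s_n^{e_n}` in the RAAG. -/
def FullyReduced {V : Type*} (X : SimpleGraph V) {n : ℕ} (s : Fin n → V) (e : Fin n → ℤ) : Prop :=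
  (∀ i, e i ≠ 0) ∧ ∀ i j : Fin n, i < j → s i = s j →
    ∃ k : Fin n, i < k ∧ k < j ∧
      RAAG.of X (s k) * RAAG.of X (s i) ≠ RAAG.of X (s i) * RAAG.of X (s k)

namespace MFR

open FreeMonoid List

variable {V : Type*} (X : SimpleGraph V)

/-! ### Length -/

def lenHom : FreeMonoid V →* Multiplicative ℕ :=
  FreeMonoid.lift fun _ => Multiplicative.ofAdd 1

lemma lenHom_apply (w : FreeMonoid V) :
    lenHom w = Multiplicative.ofAdd w.toList.length := by
  rw [lenHom, FreeMonoid.lift_apply]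
  induction w.toList with
  | nil => rfl
  | cons a l ih =>
      rw [List.map_cons, List.prod_cons, ih, List.length_cons, ← ofAdd_add, add_comm]

lemma raamCon_le_ker_lenHom : raamCon X ≤ Con.ker (lenHom (V := V)) := by
  apply Con.conGen_le.2
  rintro a b ⟨x, y, hadj, rfl, rfl⟩
  show lenHom _ = lenHom _
  rw [map_mul, map_mul, mul_comm]

lemma length_invariant {a b : FreeMonoid V} (h : raamCon X a b) :
    a.toList.length = b.toList.length := by
  have := raamCon_le_ker_lenHom X h
  rw [Con.ker_rel, lenHom_apply, lenHom_apply] at this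
  exact Multiplicative.ofAdd.injective this

/-! ### Adjacent vertices commute in the RAAG -/

lemma adj_commute {x y : V} (h : X.Adj x y) :
    RAAG.of X x * RAAG.of X y = RAAG.of X y * RAAG.of X x := by
  have hr : (FreeGroup.of x * FreeGroup.of y * (FreeGroup.of x)⁻¹ * (FreeGroup.of y)⁻¹ :
      FreeGroup V) ∈ Subgroup.normalClosure (raagRels X) :=
    Subgroup.subset_normalClosure ⟨x, y, h, rfl⟩
  have h1 : (QuotientGroup.mk (FreeGroup.of x * FreeGroup.of y * (FreeGroup.of x)⁻¹ *
      (FreeGroup.of y)⁻¹) : PresentedGroup (raagRels X)) = 1 :=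
    (QuotientGroup.eq_one_iff _).2 hr
  have h2 : (QuotientGroup.mk (FreeGroup.of x) : PresentedGroup (raagRels X)) = RAAG.of X x := rfl
  have h3 : (QuotientGroup.mk (FreeGroup.of y) : PresentedGroup (raagRels X)) = RAAG.of X y := rfl
  have := h1
  rw [QuotientGroup.mk_mul, QuotientGroup.mk_mul, QuotientGroup.mk_mul, QuotientGroup.mk_inv,
    QuotientGroup.mk_inv, h2, h3] at this
  have this : (RAAG.of X x * RAAG.of X y * (RAAG.of X x)⁻¹ * (RAAG.of X y)⁻¹ : RAAG X) = 1 := this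
  rw [mul_inv_eq_iff_eq_mul, one_mul, mul_inv_eq_iff_eq_mul] at this
  exact this

/-! ### The blocker projection -/

open Classical in
/-- `some true` for `x` itself, `none` for neighbours of `x`, `some false` for
letters not commuting with `x`. -/
noncomputable def gmap (x : V) (y : V) : Option Bool :=
  if y = x then some true else if X.Adj x y then none else some false

noncomputable def phiHom (x : V) : FreeMonoid V →* FreeMonoid Bool :=
  FreeMonoid.lift fun y => match gmap X x y with
    | some b => FreeMonoid.of b
    | none => 1

lemma phiHom_ofList (x : V) (l : List V) :
    phiHom X x (FreeMonoid.ofList l) = FreeMonoid.ofList (l.filterMap (gmap X x)) := by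
  rw [phiHom, FreeMonoid.lift_apply, FreeMonoid.toList_ofList]
  induction l with
  | nil => rfl
  | cons a l ih =>
      rw [List.map_cons, List.prod_cons, ih, List.filterMap_cons]
      cases hg : gmap X x a with
      | none => simp [hg]
      | some b =>
          simp only [hg]
          rfl

lemma raamCon_le_ker_phiHom (x : V) : raamCon X ≤ Con.ker (phiHom X x) := by
  apply Con.conGen_le.2
  rintro a b ⟨y, z, hadj, rfl, rfl⟩
  show phiHom X x (FreeMonoid.of y * FreeMonoid.of z) = phiHom X x (FreeMonoid.of z * FreeMonoid.of y)
  have hyz : y ≠ z := hadj.ne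
  rw [map_mul, map_mul]
  have hval : ∀ u : V, phiHom X x (FreeMonoid.of u) = match gmap X x u with
      | some b => FreeMonoid.of b
      | none => 1 := fun u => FreeMonoid.lift_eval_of _ u
  rw [hval y, hval z]
  by_cases hy : y = x
  · have hzx : z ≠ x := fun hh => hyz (hy.trans hh.symm)
    have hxz : X.Adj x z := hy ▸ hadj
    have : gmap X x z = none := by rw [gmap, if_neg hzx, if_pos hxz]
    rw [this]
    simp
  · by_cases hz : z = x
    · have hxy : X.Adj x y := (hz ▸ hadj).symm
      have : gmap X x y = none := by rw [gmap, if_neg hy, if_pos hxy]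
      rw [this]
      simp
    · cases hgy : gmap X x y with
      | none => simp
      | some by_ =>
          cases hgz : gmap X x z with
          | none => simp
          | some bz =>
              have hby : by_ = false := by
                rw [gmap, if_neg hy] at hgy
                by_cases hxy : X.Adj x y
                · rw [if_pos hxy] at hgy; cases hgy
                · rw [if_neg hxy] at hgy; exact (Option.some_inj.1 hgy).symm
              have hbz : bz = false := by
                rw [gmap, if_neg hz] at hgz
                by_cases hxz : X.Adj x z
                · rw [if_pos hxz] at hgz; cases hgz
                · rw [if_neg hxz] at hgz; exact (Option.some_inj.1 hgz).symm
              subst hby hbz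
              rfl

lemma phi_invariant (x : V) {a b : FreeMonoid V} (h : raamCon X a b) :
    phiHom X x a = phiHom X x b :=
  raamCon_le_ker_phiHom X x h

end MFR
namespace MFR
variable {V : Type*} (X : SimpleGraph V)

lemma gmap_self (x : V) : gmap X x x = some true := by rw [gmap, if_pos rfl]

lemma gmap_eq_some_true {x y : V} (h : gmap X x y = some true) : y = x := by
  rw [gmap] at h
  by_cases h1 : y = x
  · exact h1
  · rw [if_neg h1] at h
    by_cases h2 : X.Adj x y
    · rw [if_pos h2] at h; cases h
    · rw [if_neg h2] at h; cases h

lemma no_true_true {n : ℕ} (s : Fin n → V)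
    (hsep : ∀ i j : Fin n, i < j → s i = s j →
      ∃ k : Fin n, i < k ∧ k < j ∧
        RAAG.of X (s k) * RAAG.of X (s i) ≠ RAAG.of X (s i) * RAAG.of X (s k))
    (x : V) :
    ¬ ∃ A B : List Bool, (List.ofFn s).filterMap (gmap X x) = A ++ true :: true :: B := by
  rintro ⟨A, B, hAB⟩
  rw [List.filterMap_eq_append_iff] at hAB
  obtain ⟨l₁, l₂, hl, hA, hB⟩ := hAB
  rw [List.filterMap_eq_cons_iff] at hB
  obtain ⟨p, a, q, hl₂, hp, ha, hq⟩ := hB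
  rw [List.filterMap_eq_cons_iff] at hq
  obtain ⟨p', a', q', hq', hp', ha', hq''⟩ := hq
  have hax : a = x := gmap_eq_some_true X ha
  have ha'x : a' = x := gmap_eq_some_true X ha'
  subst hq' hl₂
  set C := l₁ ++ p with hC
  have hlv : List.ofFn s = C ++ a :: (p' ++ a' :: q') := by
    rw [hl, hC, List.append_assoc]
  have hlen : n = C.length + 1 + p'.length + 1 + q'.length := by
    have := congrArg List.length hlv
    simp only [List.length_ofFn, List.length_append, List.length_cons] at this
    omega
  have hin : C.length < n := by omega
  have hjn : C.length + p'.length + 1 < n := by omega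
  set fi : Fin n := ⟨C.length, hin⟩
  set fj : Fin n := ⟨C.length + p'.length + 1, hjn⟩
  have hgetC : ∀ (m : ℕ) (hm : m < n), (C ++ a :: (p' ++ a' :: q'))[m]'(by
      rw [← hlv]; simpa using hm) = s ⟨m, hm⟩ := by
    intro m hm
    have h1 : (List.ofFn s)[m]'(by simpa using hm) = s ⟨m, hm⟩ := List.getElem_ofFn _
    rw [← h1]
    exact (List.getElem_of_eq hlv.symm _)
  have hsfi : s fi = a := by
    have := hgetC C.length hin
    rw [List.getElem_append_right (le_refl C.length)] at this
    simp only [Nat.sub_self, List.getElem_cons_zero] at this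
    exact this.symm
  have hsfj : s fj = a' := by
    have := hgetC (C.length + p'.length + 1) hjn
    rw [List.getElem_append_right (by omega)] at this
    have h2 : C.length + p'.length + 1 - C.length = p'.length + 1 := by omega
    simp only [h2] at this
    rw [List.getElem_cons_succ] at this
    rw [List.getElem_append_right (le_refl p'.length)] at this
    simp only [Nat.sub_self, List.getElem_cons_zero] at this
    exact this.symm
  have hij : fi < fj := by
    simp only [fi, fj, Fin.mk_lt_mk]
    omega
  obtain ⟨k, hik, hkj, hnc⟩ := hsep fi fj hij (by rw [hsfi, hsfj, hax, ha'x])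
  have hk1 : C.length < (k : ℕ) := by simpa [fi, Fin.lt_def] using hik
  have hk2 : (k : ℕ) < C.length + p'.length + 1 := by simpa [fj, Fin.lt_def] using hkj
  have hsk : s k ∈ p' := by
    have := hgetC (k : ℕ) k.isLt
    rw [List.getElem_append_right (by omega : C.length ≤ (k : ℕ))] at this
    rw [List.getElem_cons] at this
    rw [dif_neg (by omega)] at this
    rw [List.getElem_append_left (by omega : (k : ℕ) - C.length - 1 < p'.length)] at this
    rw [Fin.eta] at this
    rw [← this]
    exact List.getElem_mem _
  have hnone := hp' _ hsk
  -- s k ≠ x and not adjacent gives gmap = some false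
  have hskx : s k ≠ x := by
    intro hh
    apply hnc
    rw [hh, hsfi, hax]
  have hadj : ¬ X.Adj x (s k) := by
    intro hadj
    apply hnc
    rw [hsfi, hax]
    exact (adj_commute X hadj).symm
  rw [gmap, if_neg hskx, if_neg hadj] at hnone
  cases hnone

lemma comb {n : ℕ} (s : Fin n → V)
    (hsep : ∀ i j : Fin n, i < j → s i = s j →
      ∃ k : Fin n, i < k ∧ k < j ∧
        RAAG.of X (s k) * RAAG.of X (s i) ≠ RAAG.of X (s i) * RAAG.of X (s k))
    (κ : Fin n → ℕ)
    (heq : raamCon X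
      (FreeMonoid.ofList (List.ofFn fun i => List.replicate (κ i) (s i)).flatten)
      (FreeMonoid.ofList (List.ofFn s))) :
    ∀ i, κ i = 1 := by
  have hle : ∀ i, κ i ≤ 1 := by
    intro i0
    by_contra hgt
    push_neg at hgt
    have hphi := phi_invariant X (s i0) heq
    rw [phiHom_ofList, phiHom_ofList] at hphi
    have hlist : (List.ofFn fun i => List.replicate (κ i) (s i)).flatten.filterMap
        (gmap X (s i0)) = (List.ofFn s).filterMap (gmap X (s i0)) := by
      have := congrArg FreeMonoid.toList hphi
      rwa [FreeMonoid.toList_ofList, FreeMonoid.toList_ofList] at this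
    refine no_true_true X s hsep (s i0) ?_
    rw [← hlist, List.filterMap_flatten]
    have hmem2 : List.replicate (κ i0) true ∈
        (List.map (List.filterMap (gmap X (s i0))) (List.ofFn fun i => List.replicate (κ i) (s i))) := by
      refine List.mem_map.2 ⟨List.replicate (κ i0) (s i0), ?_, ?_⟩
      · rw [List.mem_ofFn]; exact ⟨i0, rfl⟩
      · rw [List.filterMap_replicate, gmap_self]
    have hinfix : List.replicate (κ i0) true <:+:
        (List.map (List.filterMap (gmap X (s i0))) (List.ofFn fun i => List.replicate (κ i) (s i))).flatten :=
      List.infix_of_mem_flatten hmem2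
    have h2 : [true, true] <+: List.replicate (κ i0) true := by
      refine ⟨List.replicate (κ i0 - 2) true, ?_⟩
      show [true, true] ++ _ = _
      rw [show [true, true] = List.replicate 2 true from rfl, ← List.replicate_add]
      congr 1
      omega
    obtain ⟨A, B, hABeq⟩ := h2.isInfix.trans hinfix
    exact ⟨A, B, by rw [← hABeq]; simp⟩
  have hlen := length_invariant X heq
  have hsum : ∑ i : Fin n, κ i = n := by
    simp only [FreeMonoid.toList_ofList, List.length_flatten, List.map_ofFn,
      Function.comp_def, List.length_replicate, List.length_ofFn, List.sum_ofFn] at hlen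
    exact hlen
  intro i0
  by_contra hne
  have h0 : κ i0 = 0 := by
    have := hle i0
    omega
  have hlt : ∑ i : Fin n, κ i < ∑ _i : Fin n, 1 :=
    Finset.sum_lt_sum (fun i _ => hle i) ⟨i0, Finset.mem_univ _, by omega⟩
  rw [hsum] at hlt
  simp at hlt

end MFR
namespace MFR
noncomputable section
variable {V : Type*} (X : SimpleGraph V)

/-! ### Length on the RAAM -/

def rlenHom : RAAM X →* Multiplicative ℕ :=
  Con.lift (raamCon X) (lenHom (V := V)) (raamCon_le_ker_lenHom X)

def rlen (m : RAAM X) : ℕ := (rlenHom X m).toAdd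

lemma rlen_mk' (w : FreeMonoid V) :
    rlen X ((raamCon X).mk' w) = w.toList.length := by
  show ((Con.lift (raamCon X) (lenHom (V := V)) (raamCon_le_ker_lenHom X))
    ((raamCon X).mk' w)).toAdd = _
  rw [Con.lift_mk', lenHom_apply]
  rfl

lemma rlen_mk (l : List V) : rlen X (RAAM.mk X l) = l.length := by
  rw [RAAM.mk, rlen_mk', FreeMonoid.toList_ofList]

lemma rlen_of (v : V) : rlen X (RAAM.of X v) = 1 := by
  rw [RAAM.of, rlen_mk']
  rfl

lemma rlen_mul (a b : RAAM X) : rlen X (a * b) = rlen X a + rlen X b := by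
  show ((rlenHom X) (a * b)).toAdd = _
  rw [map_mul]
  rfl

lemma rlen_one : rlen X (1 : RAAM X) = 0 := by
  show ((rlenHom X) 1).toAdd = _
  rw [map_one]
  rfl

/-! ### Submodule of elements supported in degree ≥ k -/

def Jmod (k : ℕ) : Submodule ℤ (RaamRing X) where
  carrier := {r | ∀ m ∈ r.coeff.support, k ≤ rlen X m}
  zero_mem' := by simp
  add_mem' := by
    classical
    intro a b ha hb m hm
    rcases Finset.mem_union.1 (Finsupp.support_add hm) with h | h
    · exact ha m h
    · exact hb m h
  smul_mem' := by
    intro c a ha m hm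
    exact ha m (Finsupp.support_smul hm)

lemma mem_Jmod {k : ℕ} {r : RaamRing X} :
    r ∈ Jmod X k ↔ ∀ m ∈ r.coeff.support, k ≤ rlen X m := by
  constructor
  · exact fun h => h
  · exact fun h => h

lemma genIdeal_le_Jmod : genIdeal X ≤ Jmod X 1 := by
  classical
  rw [genIdeal, Submodule.span_le]
  rintro r ⟨a, b, v, rfl⟩
  rw [SetLike.mem_coe, mem_Jmod]
  intro m hm
  obtain ⟨p, hp, q, hq, rfl⟩ := Finset.mem_mul.1 (MonoidAlgebra.support_coeff_mul_subset (a * vgen X v) b hm)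
  obtain ⟨p1, hp1, p2, hp2, rfl⟩ := Finset.mem_mul.1 (MonoidAlgebra.support_coeff_mul_subset a (vgen X v) hp)
  have hp2' : p2 = RAAM.of X v := by
    have : (vgen X v).coeff.support = {RAAM.of X v} := by
      rw [vgen, MonoidAlgebra.of_apply, MonoidAlgebra.coeff_single]
      exact Finsupp.support_single_ne_zero _ one_ne_zero
    rw [this] at hp2
    exact Finset.mem_singleton.1 hp2
  rw [rlen_mul, rlen_mul, hp2', rlen_of]
  omega

lemma Jmod_mul (a b : ℕ) : Jmod X a * Jmod X b ≤ Jmod X (a + b) := by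
  classical
  rw [Submodule.mul_le]
  intro f hf g hg
  rw [mem_Jmod]
  intro m hm
  replace hf := (mem_Jmod X).1 hf
  replace hg := (mem_Jmod X).1 hg
  obtain ⟨p, hp, q, hq, rfl⟩ := Finset.mem_mul.1 (MonoidAlgebra.support_coeff_mul_subset f g hm)
  rw [rlen_mul]
  exact Nat.add_le_add (hf p hp) (hg q hq)

lemma genIdeal_pow_le_Jmod (k : ℕ) : genIdeal X ^ (k + 1) ≤ Jmod X (k + 1) := by
  induction k with
  | zero => simpa using genIdeal_le_Jmod X
  | succ k ih =>
      rw [pow_succ]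
      exact le_trans (mul_le_mul' ih (genIdeal_le_Jmod X)) (Jmod_mul X (k + 1) 1)

/-! ### `genIdeal ^ (k+1)` is a two-sided ideal -/

lemma genIdeal_mul_left (x : RaamRing X) (hx : x ∈ genIdeal X) (r : RaamRing X) :
    r * x ∈ genIdeal X := by
  induction hx using Submodule.span_induction generalizing r with
  | mem y hy =>
      obtain ⟨a, b, v, rfl⟩ := hy
      exact Submodule.subset_span ⟨r * a, b, v, by rw [← mul_assoc, ← mul_assoc]⟩
  | zero => rw [mul_zero]; exact (genIdeal X).zero_mem
  | add y z _ _ hy hz => rw [mul_add]; exact (genIdeal X).add_mem (hy r) (hz r)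
  | smul c y _ hy => rw [mul_smul_comm]; exact (genIdeal X).smul_mem c (hy r)

lemma genIdeal_pow_mul_left (k : ℕ) (x : RaamRing X) (hx : x ∈ genIdeal X ^ (k + 1))
    (r : RaamRing X) : r * x ∈ genIdeal X ^ (k + 1) := by
  rw [pow_succ'] at hx ⊢
  refine Submodule.mul_induction_on (C := fun z => r * z ∈ genIdeal X * genIdeal X ^ k) hx
    (fun m hm n hn => ?_) (fun p q hp hq => ?_)
  · show r * (m * n) ∈ _
    rw [← mul_assoc]
    exact Submodule.mul_mem_mul (genIdeal_mul_left X m hm r) hn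
  · show r * (p + q) ∈ _
    rw [mul_add]
    exact add_mem hp hq

lemma genIdeal_pow_mul_right (k : ℕ) (x : RaamRing X) (hx : x ∈ genIdeal X ^ (k + 1))
    (r : RaamRing X) : x * r ∈ genIdeal X ^ (k + 1) := by
  rw [pow_succ] at hx ⊢
  refine Submodule.mul_induction_on (C := fun z => z * r ∈ genIdeal X ^ k * genIdeal X) hx
    (fun m hm n hn => ?_) (fun p q hp hq => ?_)
  · show m * n * r ∈ _
    rw [mul_assoc]
    exact Submodule.mul_mem_mul hm (genIdeal_mul_right X n hn r)
  · show (p + q) * r ∈ _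
    rw [add_mul]
    exact add_mem hp hq

/-- The ring congruence `a ≡ b ↔ a - b ∈ genIdeal ^ (k+1)`. -/
def idealCon (k : ℕ) : RingCon (RaamRing X) where
  r a b := a - b ∈ genIdeal X ^ (k + 1)
  iseqv := by
    refine ⟨fun a => ?_, fun {a b} h => ?_, fun {a b c} h1 h2 => ?_⟩
    · rw [sub_self]; exact zero_mem _
    · rw [← neg_sub]; exact neg_mem h
    · have := add_mem h1 h2
      rwa [sub_add_sub_cancel] at this
  mul' := by
    intro a b c d h1 h2
    have key : a * c - b * d = a * (c - d) + (a - b) * d := by noncomm_ring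
    show a * c - b * d ∈ _
    rw [key]
    exact add_mem (genIdeal_pow_mul_left X k _ h2 a) (genIdeal_pow_mul_right X k _ h1 d)
  add' := by
    intro a b c d h1 h2
    show (a + c) - (b + d) ∈ _
    have := add_mem h1 h2
    rwa [sub_add_sub_comm] at this

lemma qcon_iff (k : ℕ) (a b : RaamRing X) :
    qcon X k a b ↔ a - b ∈ genIdeal X ^ (k + 1) := by
  constructor
  · intro h
    exact RingCon.ringConGen_le.2 (fun x y hxy => (hxy : idealCon X k x y)) h
  · intro h
    exact RingConGen.Rel.of a b h

lemma mk'_eq_iff (k : ℕ) (a b : RaamRing X) :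
    RingCon.mk' (qcon X k) a = RingCon.mk' (qcon X k) b ↔
      a - b ∈ genIdeal X ^ (k + 1) := by
  rw [← qcon_iff]
  exact RingCon.eq _

lemma coeff_eq {k : ℕ} {a b : RaamRing X}
    (h : RingCon.mk' (qcon X k) a = RingCon.mk' (qcon X k) b)
    {m : RAAM X} (hm : rlen X m ≤ k) : a.coeff m = b.coeff m := by
  have hmem := (mem_Jmod X).1 (genIdeal_pow_le_Jmod X k ((mk'_eq_iff X k a b).1 h))
  have h0 : (a - b).coeff m = 0 := by
    by_contra h0
    have hsupp : m ∈ (a - b).coeff.support := Finsupp.mem_support_iff.2 h0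
    have := hmem m hsupp
    omega
  rw [MonoidAlgebra.coeff_sub, Finsupp.sub_apply] at h0
  omega

/-! ### Powers of the augmentation ideal -/

def Wmod (a : ℕ) : Submodule ℤ (PSeries X) where
  carrier := {f | ∀ j : ℕ, ∃ r ∈ genIdeal X ^ a,
    RingCon.mk' (qcon X j) r = (f : ∀ k, QRing X k) j}
  zero_mem' := fun j => ⟨0, zero_mem _, by rw [map_zero]; rfl⟩
  add_mem' := by
    intro f g hf hg j
    obtain ⟨r, hr, hr2⟩ := hf j
    obtain ⟨r', hr', hr2'⟩ := hg j
    exact ⟨r + r', add_mem hr hr', by rw [map_add, hr2, hr2']; rfl⟩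
  smul_mem' := by
    intro c f hf j
    obtain ⟨r, hr, hr2⟩ := hf j
    refine ⟨c • r, Submodule.smul_mem _ c hr, ?_⟩
    rw [map_zsmul, hr2]
    rfl

lemma Wmod_mul (a b : ℕ) : Wmod X a * Wmod X b ≤ Wmod X (a + b) := by
  rw [Submodule.mul_le]
  intro f hf g hg j
  obtain ⟨r, hr, hr2⟩ := hf j
  obtain ⟨r', hr', hr2'⟩ := hg j
  refine ⟨r * r', ?_, by rw [map_mul, hr2, hr2']; rfl⟩
  have := Submodule.mul_mem_mul hr hr'
  rwa [← pow_add] at this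

lemma chain_down (f : PSeries X) (j : ℕ) (r : RaamRing X)
    (h : RingCon.mk' (qcon X j) r = (f : ∀ k, QRing X k) j) :
    RingCon.mk' (qcon X 0) r = (f : ∀ k, QRing X k) 0 := by
  induction j with
  | zero => exact h
  | succ j ih =>
      apply ih
      rw [← f.prop j, ← h, qtrans_mk]

lemma augIdeal_le_Wmod : augIdeal X ≤ Wmod X 1 := by
  intro f hf j
  obtain ⟨r, hr⟩ := Quotient.mk''_surjective ((f : ∀ k, QRing X k) j)
  refine ⟨r, ?_, hr⟩
  have h0 : RingCon.mk' (qcon X 0) r = (f : ∀ k, QRing X k) 0 := chain_down X f j r hr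
  have hz : (f : ∀ k, QRing X k) 0 = 0 := hf
  rw [hz] at h0
  have : r - 0 ∈ genIdeal X ^ (0 + 1) := by
    rw [← mk'_eq_iff]
    rw [h0, map_zero]
  simpa using this

lemma augIdeal_pow_le_Wmod (k : ℕ) : augIdeal X ^ (k + 1) ≤ Wmod X (k + 1) := by
  induction k with
  | zero => simpa using augIdeal_le_Wmod X
  | succ k ih =>
      rw [pow_succ]
      exact le_trans (mul_le_mul' ih (augIdeal_le_Wmod X)) (Wmod_mul X (k + 1) 1)

end
end MFR
namespace MFR
noncomputable section
open Polynomial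
variable {V : Type*} (X : SimpleGraph V)

/-! ### Evaluation at a level -/

def evalRing (j : ℕ) : PSeries X →+* QRing X j :=
  (Pi.evalRingHom (QRing X) j).comp (PSeries X).subtype

lemma evalRing_apply (j : ℕ) (f : PSeries X) :
    evalRing X j f = (f : ∀ k, QRing X k) j := rfl

lemma evalRing_toPSeries (j : ℕ) (r : RaamRing X) :
    evalRing X j (toPSeries X r) = RingCon.mk' (qcon X j) r := rfl

/-! ### Free monoid power lemmas -/

lemma of_pow_eq (y : V) (k : ℕ) :
    (FreeMonoid.of y : FreeMonoid V) ^ k = FreeMonoid.ofList (List.replicate k y) := by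
  induction k with
  | zero => rfl
  | succ m ih =>
      rw [pow_succ', ih, List.replicate_succ, ← FreeMonoid.ofList_singleton,
        ← FreeMonoid.ofList_append]
      rfl

lemma prod_ofList (L : List (List V)) :
    (L.map FreeMonoid.ofList).prod = FreeMonoid.ofList L.flatten := by
  induction L with
  | nil => rfl
  | cons a L ih => rw [List.map_cons, List.prod_cons, ih, List.flatten_cons,
      FreeMonoid.ofList_append]

/-! ### The truncated polynomial representatives -/

def geomP (N : ℕ) : Polynomial ℤ := ∑ k ∈ Finset.range (N + 1), (-Polynomial.X) ^ k

def qpol (N : ℕ) (e : ℤ) : Polynomial ℤ :=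
  if 0 ≤ e then (1 + Polynomial.X) ^ e.toNat else geomP N ^ e.natAbs

lemma geomP_eval_zero (N : ℕ) : (geomP N).eval 0 = 1 := by
  rw [geomP]
  rw [Polynomial.eval_finset_sum]
  rw [Finset.sum_eq_single_of_mem 0 (Finset.mem_range.2 (Nat.succ_pos N))]
  · simp
  · intro k _ hk
    simp [zero_pow hk]

lemma geomP_derivative_eval_zero (N : ℕ) (hN : 1 ≤ N) :
    (Polynomial.derivative (geomP N)).eval 0 = -1 := by
  rw [geomP, Polynomial.derivative_sum, Polynomial.eval_finset_sum]
  rw [Finset.sum_eq_single_of_mem 1 (Finset.mem_range.2 (by omega))]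
  · simp
  · intro k _ hk
    rcases Nat.eq_zero_or_pos k with rfl | hkpos
    · simp
    · rw [Polynomial.derivative_pow]
      simp only [Polynomial.derivative_neg, Polynomial.derivative_X, Polynomial.eval_mul,
        Polynomial.eval_pow, Polynomial.eval_neg, Polynomial.eval_X, Polynomial.eval_C]
      rw [neg_zero, zero_pow (by omega : k - 1 ≠ 0)]
      ring

lemma qpol_coeff_zero (N : ℕ) (e : ℤ) : (qpol N e).coeff 0 = 1 := by
  rw [Polynomial.coeff_zero_eq_eval_zero, qpol]
  split
  · simp
  · rw [Polynomial.eval_pow, geomP_eval_zero, one_pow]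

lemma coeff_one_eq_deriv (p : Polynomial ℤ) :
    p.coeff 1 = (Polynomial.derivative p).eval 0 := by
  rw [← Polynomial.coeff_zero_eq_eval_zero, Polynomial.coeff_derivative]
  push_cast
  ring

lemma qpol_coeff_one (N : ℕ) (hN : 1 ≤ N) (e : ℤ) : (qpol N e).coeff 1 = e := by
  rw [coeff_one_eq_deriv, qpol]
  split
  · rename_i he
    rw [Polynomial.derivative_pow]
    simp only [Polynomial.derivative_add, Polynomial.derivative_one,
      Polynomial.derivative_X, zero_add, mul_one, Polynomial.eval_mul, Polynomial.eval_C,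
      Polynomial.eval_pow, Polynomial.eval_add, Polynomial.eval_one, Polynomial.eval_X, add_zero,
      one_pow, mul_one]
    exact Int.toNat_of_nonneg he
  · rename_i he
    rw [Polynomial.derivative_pow, Polynomial.eval_mul, Polynomial.eval_mul,
      Polynomial.eval_C, Polynomial.eval_pow, geomP_eval_zero, one_pow, mul_one,
      geomP_derivative_eval_zero N hN]
    omega

/-! ### vgen facts -/

lemma vgen_mem_genIdeal (v : V) : vgen X v ∈ genIdeal X :=
  Submodule.subset_span ⟨1, 1, v, by rw [one_mul, mul_one]⟩

lemma mk'_one_sub_pow (N : ℕ) (v : V) :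
    RingCon.mk' (qcon X N) (1 - (-vgen X v) ^ (N + 1)) = 1 := by
  rw [show (1 : QRing X N) = RingCon.mk' (qcon X N) 1 from (map_one _).symm, mk'_eq_iff]
  have h1 : (-vgen X v) ^ (N + 1) ∈ genIdeal X ^ (N + 1) :=
    Submodule.pow_mem_pow _ (neg_mem (vgen_mem_genIdeal X v)) _
  rw [sub_sub_cancel_left]
  exact neg_mem h1

/-! ### Level-`N` value of `μ` on powers of generators -/

lemma evalRing_mu_zpow (μ : RAAG X →* (PSeries X)ˣ)
    (hμ : ∀ v : V, (μ (RAAG.of X v) : PSeries X) = 1 + toPSeries X (vgen X v))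
    (N : ℕ) (v : V) (e : ℤ) :
    evalRing X N ((μ (RAAG.of X v ^ e) : PSeries X)) =
      RingCon.mk' (qcon X N) (Polynomial.aeval (vgen X v) (qpol N e)) := by
  have hbase : evalRing X N ((μ (RAAG.of X v) : PSeries X))
      = RingCon.mk' (qcon X N) (1 + vgen X v) := by
    rw [hμ v, RingHom.map_add, RingHom.map_one, evalRing_toPSeries,
      ← RingHom.map_one (RingCon.mk' (qcon X N)), ← RingHom.map_add]
  have haevalpow : ∀ m : ℕ, ((Polynomial.aeval (vgen X v)) (((1 + Polynomial.X) : Polynomial ℤ) ^ m)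
      : RaamRing X) = (1 + vgen X v) ^ m := by
    intro m
    rw [map_pow, map_add, map_one, Polynomial.aeval_X]
  rcases le_or_gt 0 e with he | he
  · rw [show RAAG.of X v ^ e = RAAG.of X v ^ e.toNat by
      rw [← zpow_natCast, Int.toNat_of_nonneg he]]
    rw [map_pow, Units.val_pow_eq_pow_val, map_pow, hbase, qpol, if_pos he, haevalpow,
      ← map_pow]
  · set m := e.natAbs with hm
    have hem : e = -(m : ℤ) := by omega
    rw [hem, zpow_neg, zpow_natCast, map_inv, map_pow]
    set u := μ (RAAG.of X v) ^ m with hu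
    have ha : evalRing X N ((u : PSeries X)) = RingCon.mk' (qcon X N) ((1 + vgen X v) ^ m) := by
      rw [hu, Units.val_pow_eq_pow_val, map_pow, hbase, ← map_pow]
    set b := RingCon.mk' (qcon X N) (Polynomial.aeval (vgen X v) (geomP N ^ m)) with hb
    have hgeom : (1 + Polynomial.X) * geomP N = 1 - (-Polynomial.X : Polynomial ℤ) ^ (N + 1) := by
      have hgs := geom_sum_mul (-Polynomial.X : Polynomial ℤ) (N + 1)
      rw [geomP]
      linear_combination -hgs
    have haux : ((1 + vgen X v) ^ m : RaamRing X) * Polynomial.aeval (vgen X v) (geomP N ^ m)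
        = Polynomial.aeval (vgen X v) (((1 + Polynomial.X) * geomP N) ^ m) := by
      rw [mul_pow, map_mul, haevalpow]
    have haux2 : (Polynomial.aeval (vgen X v) (geomP N ^ m) : RaamRing X)
        * ((1 + vgen X v) ^ m)
        = Polynomial.aeval (vgen X v) (((1 + Polynomial.X) * geomP N) ^ m) := by
      rw [← haevalpow m, ← map_mul, mul_pow, mul_comm (geomP N ^ m)]
    have hone : RingCon.mk' (qcon X N)
        (Polynomial.aeval (vgen X v) (((1 + Polynomial.X) * geomP N) ^ m)) = 1 := by
      rw [hgeom, map_pow, map_pow]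
      have h3 : (Polynomial.aeval (vgen X v)) ((1 : Polynomial ℤ) - (-Polynomial.X) ^ (N + 1))
          = 1 - (-vgen X v) ^ (N + 1) := by
        rw [map_sub, map_one, map_pow, map_neg, Polynomial.aeval_X]
      rw [h3, mk'_one_sub_pow, one_pow]
  -- now conclude
    have hab : evalRing X N ((u : PSeries X)) * b = 1 := by
      rw [ha, hb, ← map_mul, haux, hone]
    have hba : b * evalRing X N ((u : PSeries X)) = 1 := by
      rw [ha, hb, ← map_mul, haux2, hone]
    have hc : evalRing X N ((↑u⁻¹ : PSeries X)) * evalRing X N ((u : PSeries X)) = 1 := by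
      rw [← map_mul]
      have : ((↑u⁻¹ : PSeries X) * (u : PSeries X)) = 1 := by
        rw [← Units.val_mul, inv_mul_cancel, Units.val_one]
      rw [this, map_one]
    have : evalRing X N ((↑u⁻¹ : PSeries X)) = b := by
      calc evalRing X N ((↑u⁻¹ : PSeries X))
          = evalRing X N ((↑u⁻¹ : PSeries X)) * (evalRing X N ((u : PSeries X)) * b) := by
            rw [hab, mul_one]
        _ = (evalRing X N ((↑u⁻¹ : PSeries X)) * evalRing X N ((u : PSeries X))) * b := by
            rw [mul_assoc]
        _ = b := by rw [hc, one_mul]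
    rw [this, hb, qpol, if_neg (by omega : ¬ (0:ℤ) ≤ -(m:ℤ))]
    simp

/-! ### Product expansion -/

lemma list_ofFn_prod_sum {R : Type*} [Semiring R] :
    ∀ {n : ℕ} (B : Fin n → ℕ) (g : (i : Fin n) → ℕ → R),
    (List.ofFn fun i => ∑ k ∈ Finset.range (B i), g i k).prod =
      ∑ κ ∈ Fintype.piFinset (fun i => Finset.range (B i)),
        (List.ofFn fun i => g i (κ i)).prod := by
  intro n
  induction n with
  | zero =>
      intro B g
      rw [List.ofFn_zero, List.prod_nil]
      have hcard : (Fintype.piFinset (fun i : Fin 0 => Finset.range (B i))).card = 1 := by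
        rw [Fintype.card_piFinset]
        simp
      obtain ⟨κ0, hκ0⟩ := Finset.card_eq_one.1 hcard
      rw [hκ0, Finset.sum_singleton, List.ofFn_zero, List.prod_nil]
  | succ n ih =>
      intro B g
      rw [List.ofFn_succ, List.prod_cons, ih (fun i => B i.succ) (fun i => g i.succ),
        Finset.sum_mul_sum]
      have hrhs : ∑ κ ∈ Fintype.piFinset (fun i : Fin (n+1) => Finset.range (B i)),
          (List.ofFn fun i => g i (κ i)).prod
          = ∑ p ∈ Finset.range (B 0) ×ˢ
              Fintype.piFinset (fun i : Fin n => Finset.range (B i.succ)),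
            g 0 p.1 * (List.ofFn fun i : Fin n => g i.succ (p.2 i)).prod := by
        refine Finset.sum_bij' (fun κ _ => (κ 0, Fin.tail κ)) (fun p _ => Fin.cons (α := fun _ => ℕ) p.1 p.2)
          ?_ ?_ ?_ ?_ ?_
        · intro κ hκ
          rw [Fin.mem_piFinset_iff_zero_tail] at hκ
          exact Finset.mem_product.2 ⟨hκ.1, hκ.2⟩
        · intro p hp
          have hmem := Finset.mem_product.1 hp
          show Fin.cons (α := fun _ => ℕ) p.1 p.2 ∈ Fintype.piFinset _
          rw [Fin.mem_piFinset_iff_zero_tail]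
          constructor
          · rw [Fin.cons_zero]; exact hmem.1
          · rw [Fin.tail_cons]; exact hmem.2
        · intro κ _
          exact Fin.cons_self_tail κ
        · intro p _
          show ((Fin.cons (α := fun _ => ℕ) p.1 p.2) 0,
            Fin.tail (Fin.cons (α := fun _ => ℕ) p.1 p.2)) = p
          rw [Fin.cons_zero, Fin.tail_cons]
        · intro κ _
          show (List.ofFn fun i => g i (κ i)).prod = _
          rw [List.ofFn_succ, List.prod_cons]
          rfl
      rw [hrhs, Finset.sum_product]

lemma prod_single_list (l : List (RAAM X)) :
    (l.map fun g => MonoidAlgebra.single g (1 : ℤ)).prod = MonoidAlgebra.single l.prod 1 := by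
  induction l with
  | nil => rw [List.map_nil, List.prod_nil, List.prod_nil, MonoidAlgebra.one_def]
  | cons a l ih =>
      rw [List.map_cons, List.prod_cons, List.prod_cons, ih, MonoidAlgebra.single_mul_single,
        one_mul]

lemma smul_list_ofFn_prod {R : Type*} [Ring R] :
    ∀ {n : ℕ} (a : Fin n → ℤ) (x : Fin n → R),
    (List.ofFn fun i => a i • x i).prod = (∏ i, a i) • (List.ofFn fun i => x i).prod := by
  intro n
  induction n with
  | zero => intro a x; simp
  | succ n ih =>
      intro a x
      rw [List.ofFn_succ, List.prod_cons, ih (fun i => a i.succ) (fun i => x i.succ),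
        List.ofFn_succ, List.prod_cons, Fin.prod_univ_succ, smul_mul_smul_comm]

end
end MFR
namespace MFR
noncomputable section
open Polynomial
variable {V : Type*} (X : SimpleGraph V)

lemma mkappa_eq {n : ℕ} (s : Fin n → V) (κ : Fin n → ℕ) :
    (List.ofFn fun i => RAAM.of X (s i) ^ κ i).prod
      = (raamCon X).mk' (FreeMonoid.ofList
          (List.ofFn fun i => List.replicate (κ i) (s i)).flatten) := by
  have h1 : (List.ofFn fun i => RAAM.of X (s i) ^ κ i)
      = List.map ((raamCon X).mk')
        (List.ofFn fun i => FreeMonoid.ofList (List.replicate (κ i) (s i))) := by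
    rw [List.map_ofFn]
    congr 1
    funext i
    show RAAM.of X (s i) ^ κ i
      = (raamCon X).mk' (FreeMonoid.ofList (List.replicate (κ i) (s i)))
    exact (MonoidHom.map_pow ((raamCon X).mk') (FreeMonoid.of (s i)) (κ i)).symm.trans
      (congrArg _ (of_pow_eq (s i) (κ i)))
  rw [h1]
  refine ((MonoidHom.map_list_prod ((raamCon X).mk') _).symm).trans ?_
  refine congrArg _ ?_
  have h2 : (List.ofFn fun i => FreeMonoid.ofList (List.replicate (κ i) (s i)))
      = (List.ofFn fun i => List.replicate (κ i) (s i)).map FreeMonoid.ofList := by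
    rw [List.map_ofFn]; rfl
  rw [h2, prod_ofList]

lemma flatten_map_singleton (l : List V) : (l.map fun a => [a]).flatten = l := by
  induction l with
  | nil => rfl
  | cons a l ih => rw [List.map_cons, List.flatten_cons, ih]; rfl

lemma mkappa_one {n : ℕ} (s : Fin n → V) :
    (List.ofFn fun i => RAAM.of X (s i) ^ (1 : ℕ)).prod = RAAM.mk X (List.ofFn s) := by
  rw [mkappa_eq, RAAM.mk]
  congr 1
  have h1 : (List.ofFn fun i => List.replicate 1 (s i))
      = (List.ofFn s).map (fun a => [a]) := by
    rw [List.map_ofFn]; rfl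
  rw [h1, flatten_map_singleton]

lemma coeff_prod_eq {n : ℕ} (hn : 1 ≤ n) (s : Fin n → V) (e : Fin n → ℤ)
    (h : FullyReduced X s e) :
    ((List.ofFn fun i => (Polynomial.aeval (vgen X (s i)) (qpol n (e i)) : RaamRing X)).prod).coeff
      (RAAM.mk X (List.ofFn s)) = ∏ i, e i := by
  classical
  set B : Fin n → ℕ := fun i => (qpol n (e i)).natDegree + 2 with hB
  have hlist : (List.ofFn fun i => (Polynomial.aeval (vgen X (s i)) (qpol n (e i)) : RaamRing X))
      = (List.ofFn fun i =>
          ∑ k ∈ Finset.range (B i), (qpol n (e i)).coeff k • (vgen X (s i)) ^ k) := by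
    congr 1
    funext i
    exact Polynomial.aeval_eq_sum_range' (by simp only [hB]; omega) _
  have hterm : ∀ κ : Fin n → ℕ,
      (List.ofFn fun i => (qpol n (e i)).coeff (κ i) • (vgen X (s i)) ^ (κ i)).prod
      = (∏ i, (qpol n (e i)).coeff (κ i)) •
        MonoidAlgebra.single ((List.ofFn fun i => RAAM.of X (s i) ^ κ i).prod) (1 : ℤ) := by
    intro κ
    rw [smul_list_ofFn_prod]
    congr 1
    have hmap : (List.ofFn fun i => (vgen X (s i) : RaamRing X) ^ κ i)
        = (List.ofFn fun i => RAAM.of X (s i) ^ κ i).map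
            (fun g => MonoidAlgebra.single g (1 : ℤ)) := by
      rw [List.map_ofFn]
      congr 1
      funext i
      show (vgen X (s i)) ^ κ i = MonoidAlgebra.single (RAAM.of X (s i) ^ κ i) 1
      rw [vgen, MonoidAlgebra.of_apply, MonoidAlgebra.single_pow, one_pow]
    rw [hmap, prod_single_list]
  rw [hlist, list_ofFn_prod_sum, MonoidAlgebra.coeff_sum, Finsupp.finset_sum_apply]
  have hmem1 : (fun _ => 1 : Fin n → ℕ) ∈ Fintype.piFinset (fun i => Finset.range (B i)) := by
    rw [Fintype.mem_piFinset]
    intro i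
    rw [Finset.mem_range]
    simp only [hB]
    omega
  rw [Finset.sum_eq_single_of_mem (fun _ => 1) hmem1 ?side]
  case side =>
    intro κ hκ hne
    rw [hterm κ, MonoidAlgebra.coeff_smul, Finsupp.smul_apply, MonoidAlgebra.coeff_single, Finsupp.single_apply, if_neg, smul_zero]
    intro hcon
    -- mκ = m forces κ = 1
    have hrel : raamCon X
        (FreeMonoid.ofList (List.ofFn fun i => List.replicate (κ i) (s i)).flatten)
        (FreeMonoid.ofList (List.ofFn s)) := by
      rw [mkappa_eq, RAAM.mk] at hcon
      exact ((raamCon X).eq).1 hcon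
    have := comb X s h.2 κ hrel
    exact hne (funext this)
  · rw [hterm, MonoidAlgebra.coeff_smul, Finsupp.smul_apply, mkappa_one, MonoidAlgebra.coeff_single, Finsupp.single_apply, if_pos rfl, smul_eq_mul,
      mul_one]
    refine Finset.prod_congr rfl fun i _ => ?_
    exact qpol_coeff_one n hn (e i)

end
end MFR
open MFR in
theorem magnus_fullyReduced_coefficient {V : Type*} [Fintype V] (X : SimpleGraph V)
    (μ : RAAG X →* (PSeries X)ˣ)
    (hμ : ∀ v : V, (μ (RAAG.of X v) : PSeries X) = 1 + toPSeries X (vgen X v))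
    {n : ℕ} (s : Fin n → V) (e : Fin n → ℤ) (h : FullyReduced X s e) (w : RAAG X)
    (hw1 : w ≠ 1) (hw : w = (List.ofFn fun i => RAAG.of X (s i) ^ e i).prod) :
    (∀ r : MonoidAlgebra ℤ (RAAM X),
        RingCon.mk' (qcon X n) r = ((μ w : PSeries X) : ∀ k, QRing X k) n →
        r.coeff (RAAM.mk X (List.ofFn s)) = ∏ i : Fin n, e i) ∧
      (∏ i : Fin n, e i) ≠ 0 ∧
      ((μ w : PSeries X) - 1) ∉ augIdeal X ^ (n + 1) := by
  classical
  have hn : 1 ≤ n := by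
    by_contra hlt
    push_neg at hlt
    have h0 : n = 0 := by omega
    subst h0
    apply hw1
    rw [hw, List.ofFn_zero, List.prod_nil]
  set r0 := (List.ofFn fun i =>
    (Polynomial.aeval (vgen X (s i)) (qpol n (e i)) : RaamRing X)).prod with hr0def
  have hkey : evalRing X n ((μ w : PSeries X)) = RingCon.mk' (qcon X n) r0 := by
    rw [hw, map_list_prod μ, List.map_ofFn]
    have hcoe : ((↑((List.ofFn (⇑μ ∘ fun i => RAAG.of X (s i) ^ e i)).prod) : PSeries X))
        = (List.ofFn fun i => (↑(μ (RAAG.of X (s i) ^ e i)) : PSeries X)).prod := by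
      rw [show ((↑((List.ofFn (⇑μ ∘ fun i => RAAG.of X (s i) ^ e i)).prod)) : PSeries X)
        = Units.coeHom (PSeries X) ((List.ofFn (⇑μ ∘ fun i => RAAG.of X (s i) ^ e i)).prod)
        from rfl]
      rw [map_list_prod (Units.coeHom (PSeries X)), List.map_ofFn]
      rfl
    rw [hcoe, map_list_prod (evalRing X n), List.map_ofFn]
    have hfun : (⇑(evalRing X n) ∘ fun i => (↑(μ (RAAG.of X (s i) ^ e i)) : PSeries X))
        = fun i => RingCon.mk' (qcon X n)
            (Polynomial.aeval (vgen X (s i)) (qpol n (e i))) := by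
      funext i
      exact evalRing_mu_zpow X μ hμ n (s i) (e i)
    rw [hfun]
    rw [show (List.ofFn fun i => RingCon.mk' (qcon X n)
        (Polynomial.aeval (vgen X (s i)) (qpol n (e i))))
      = (List.ofFn fun i => (Polynomial.aeval (vgen X (s i)) (qpol n (e i)) : RaamRing X)).map
          (RingCon.mk' (qcon X n)) from by rw [List.map_ofFn]; rfl]
    exact (map_list_prod (RingCon.mk' (qcon X n)) _).symm
  have hcoeffr0 : r0.coeff (RAAM.mk X (List.ofFn s)) = ∏ i, e i := coeff_prod_eq X hn s e h
  have hlenm : rlen X (RAAM.mk X (List.ofFn s)) = n := by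
    rw [rlen_mk, List.length_ofFn]
  have hne : (∏ i : Fin n, e i) ≠ 0 := Finset.prod_ne_zero_iff.2 fun i _ => h.1 i
  refine ⟨?_, hne, ?_⟩
  · intro r hr
    have heq2 : RingCon.mk' (qcon X n) r = RingCon.mk' (qcon X n) r0 := by
      rw [hr, ← evalRing_apply, hkey]
    have := coeff_eq X heq2 (m := RAAM.mk X (List.ofFn s)) (by omega)
    rw [this, hcoeffr0]
  · intro hmem
    obtain ⟨rr, hrr, hrr2⟩ := augIdeal_pow_le_Wmod X n hmem n
    have h0 : RingCon.mk' (qcon X n) rr = 0 := by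
      have : RingCon.mk' (qcon X n) rr = RingCon.mk' (qcon X n) 0 := by
        rw [mk'_eq_iff]
        simpa using hrr
      rw [this, map_zero]
    have hsub : (((μ w : PSeries X) - 1 : PSeries X) : ∀ k, QRing X k) n
        = ((μ w : PSeries X) : ∀ k, QRing X k) n - 1 := rfl
    have hμn : ((μ w : PSeries X) : ∀ k, QRing X k) n = 1 := by
      have h2 := hrr2
      rw [hsub, h0] at h2
      exact (sub_eq_zero.1 h2.symm)
    have heq3 : RingCon.mk' (qcon X n) r0 = RingCon.mk' (qcon X n) 1 := by
      calc RingCon.mk' (qcon X n) r0 = evalRing X n ((μ w : PSeries X)) := hkey.symm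
        _ = 1 := hμn
        _ = RingCon.mk' (qcon X n) 1 := (map_one _).symm
    have hc := coeff_eq X heq3 (m := RAAM.mk X (List.ofFn s)) (by omega)
    rw [hcoeffr0] at hc
    have h1m : (1 : RaamRing X).coeff (RAAM.mk X (List.ofFn s)) = 0 := by
      rw [MonoidAlgebra.one_def, MonoidAlgebra.coeff_single, Finsupp.single_apply, if_neg]
      intro hcon
      have := congrArg (rlen X) hcon
      rw [rlen_one, hlenm] at this
      omega
    rw [h1m] at hc
    exact hne hc
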